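/- For fixed nonzero bandlimited f ∈ B_W, the infimum over nonzero time-limited g ∈ D_T of the angle arg(f,g) = arccos( Sc(<f,g>)/(‖f‖‖g‖) ) equals arccos( ‖D_T f‖ / ‖f‖ ), and is attained by g = k D_T f for any positive real constant k. -/

import Mathlib

open MeasureTheory

/-- The quaternionic exponential `e^{iθ} = cos θ + i sin θ`. -/
noncomputable def expI (θ : ℝ) : Quaternion ℝ := ⟨Real.cos θ, Real.sin θ, 0, 0⟩

/-- The quaternionic exponential `e^{jθ} = cos θ + j sin θ`. -/
noncomputable def expJ (θ : ℝ) : Quaternion ℝ := ⟨Real.cos θ, 0, Real.sin θ, 0⟩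

/-- The two-sided quaternionic Fourier transform. -/
noncomputable def QFT (f : ℝ × ℝ → Quaternion ℝ) (u v : ℝ) : Quaternion ℝ :=
  (1 / (2 * Real.pi)) • ∫ p : ℝ × ℝ, expI (-(u * p.1)) * f p * expJ (-(v * p.2))

/-- The `L²` norm of a quaternion-valued function on `ℝ²`. -/
noncomputable def L2norm (f : ℝ × ℝ → Quaternion ℝ) : ℝ :=
  Real.sqrt (∫ p : ℝ × ℝ, ‖f p‖ ^ 2)

/-- The angle between two quaternion-valued functions. -/
noncomputable def qangle (f g : ℝ × ℝ → Quaternion ℝ) : ℝ :=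
  Real.arccos ((∫ p : ℝ × ℝ, f p * star (g p)).re / (L2norm f * L2norm g))

/-- The time-limiting (truncation) operator `D_T`. -/
noncomputable def DT (T : ℝ) (f : ℝ × ℝ → Quaternion ℝ) : ℝ × ℝ → Quaternion ℝ :=
  fun p => if p ∈ Set.Icc ((-T, -T) : ℝ × ℝ) (T, T) then f p else 0

lemma aux_sq_integrable (f : ℝ × ℝ → Quaternion ℝ) (hf : MemLp f 2 (volume : Measure (ℝ × ℝ))) :
    Integrable (fun p => ‖f p‖ ^ 2) (volume : Measure (ℝ × ℝ)) := by
  have h := hf.integrable_norm_rpow two_ne_zero ENNReal.ofNat_ne_top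
  have h2 : ((2 : ENNReal)).toReal = (2 : ℝ) := by simp
  rw [h2] at h
  have h3 : ∀ x : ℝ, 0 ≤ x → x ^ (2:ℝ) = x ^ 2 := fun x hx => by
    rw [show (2:ℝ) = ((2:ℕ):ℝ) by norm_num, Real.rpow_natCast]
  refine h.congr (Filter.Eventually.of_forall fun p => ?_)
  exact h3 _ (norm_nonneg _)

lemma aux_normsq (f : ℝ × ℝ → Quaternion ℝ) (hf : MemLp f 2 (volume : Measure (ℝ × ℝ))) :
    (∫ p : ℝ × ℝ, ‖f p‖ ^ 2) = ‖hf.toLp f‖ ^ 2 := by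
  have h1 : (inner ℝ (hf.toLp f) (hf.toLp f) : ℝ) = ∫ p : ℝ × ℝ, (inner ℝ (f p) (f p) : ℝ) := by
    rw [MeasureTheory.L2.inner_def]
    refine integral_congr_ae ?_
    filter_upwards [hf.coeFn_toLp] with p hp
    rw [hp]
  rw [← real_inner_self_eq_norm_sq, h1]
  simp_rw [real_inner_self_eq_norm_sq]

lemma aux_L2norm (f : ℝ × ℝ → Quaternion ℝ) (hf : MemLp f 2 (volume : Measure (ℝ × ℝ))) :
    L2norm f = ‖hf.toLp f‖ := by
  rw [L2norm, aux_normsq f hf, Real.sqrt_sq (norm_nonneg _)]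

lemma aux_integrable_mul_star (f g : ℝ × ℝ → Quaternion ℝ)
    (hf : MemLp f 2 (volume : Measure (ℝ × ℝ))) (hg : MemLp g 2 (volume : Measure (ℝ × ℝ))) :
    Integrable (fun p => f p * star (g p)) (volume : Measure (ℝ × ℝ)) := by
  have hb : Integrable (fun p => ‖f p‖ * ‖g p‖) (volume : Measure (ℝ × ℝ)) := by
    have h2 := MeasureTheory.L2.integrable_inner (𝕜 := ℝ) ((hf.norm).toLp _) ((hg.norm).toLp _)
    refine h2.congr ?_
    filter_upwards [(hf.norm).coeFn_toLp, (hg.norm).coeFn_toLp] with p h1 h2'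
    rw [h1, h2', RCLike.inner_apply, starRingEnd_apply, star_trivial, mul_comm]
  have hstar_cont : Continuous (star : Quaternion ℝ → Quaternion ℝ) := by
    have : (star : Quaternion ℝ → Quaternion ℝ) = fun a => ((2 * a.re : ℝ) : Quaternion ℝ) - a :=
      funext fun a => a.star_eq_two_re_sub
    rw [this]
    exact ((Quaternion.continuous_coe).comp (continuous_const.mul Quaternion.continuous_re)).sub
      continuous_id
  have hm : AEStronglyMeasurable (fun p => f p * star (g p)) (volume : Measure (ℝ × ℝ)) :=
    hf.aestronglyMeasurable.mul
      (hstar_cont.comp_aestronglyMeasurable hg.aestronglyMeasurable)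
  refine hb.mono' hm (Filter.Eventually.of_forall fun p => ?_)
  rw [norm_mul, Quaternion.norm_star]

lemma aux_sc (f g : ℝ × ℝ → Quaternion ℝ)
    (hf : MemLp f 2 (volume : Measure (ℝ × ℝ))) (hg : MemLp g 2 (volume : Measure (ℝ × ℝ))) :
    (∫ p : ℝ × ℝ, f p * star (g p)).re = (inner ℝ (hf.toLp f) (hg.toLp g) : ℝ) := by
  have hint := aux_integrable_mul_star f g hf hg
  have h1 : (∫ p : ℝ × ℝ, f p * star (g p)).re
      = ∫ p : ℝ × ℝ, (f p * star (g p)).re := by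
    have h := integral_inner (𝕜 := ℝ) hint (1 : Quaternion ℝ)
    have hpt : ∀ q : Quaternion ℝ, (inner ℝ (1 : Quaternion ℝ) q : ℝ) = q.re := fun q => by
      rw [Quaternion.inner_def, one_mul, Quaternion.re_star]
    rw [← hpt (∫ p : ℝ × ℝ, f p * star (g p)), ← h]
    exact integral_congr_ae (Filter.Eventually.of_forall fun p => hpt (f p * star (g p)))
  rw [h1, MeasureTheory.L2.inner_def]
  refine integral_congr_ae ?_
  filter_upwards [hf.coeFn_toLp, hg.coeFn_toLp] with p h1' h2'
  rw [h1', h2', Quaternion.inner_def]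

lemma aux_arccos_le {x y : ℝ} (h : x ≤ y) : Real.arccos y ≤ Real.arccos x := by
  rw [Real.arccos_eq_pi_div_two_sub_arcsin, Real.arccos_eq_pi_div_two_sub_arcsin]
  exact sub_le_sub_left (Real.monotone_arcsin h) _

/-- For fixed nonzero bandlimited `f ∈ B_W`, the infimum over
nonzero time-limited `g ∈ D_T` of the angle `arg(f,g)` equals
`arccos(‖D_T f‖ / ‖f‖)`, and is attained by `g = k D_T f` for any `k > 0`. -/
theorem least_angle_to_timelimited (T W : ℝ) (hT : 0 < T) (hW : 0 < W)
    (f : ℝ × ℝ → Quaternion ℝ)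
    (hf : MemLp f 2 (volume : Measure (ℝ × ℝ)))
    (hfne : (∫ p : ℝ × ℝ, ‖f p‖ ^ 2) ≠ 0)
    (hband : ∀ u v : ℝ, (u, v) ∉ Set.Icc ((-W, -W) : ℝ × ℝ) (W, W) →
      QFT f u v = 0) :
    IsGLB {a : ℝ | ∃ g : ℝ × ℝ → Quaternion ℝ,
        MemLp g 2 (volume : Measure (ℝ × ℝ)) ∧
        (∀ p : ℝ × ℝ, p ∉ Set.Icc ((-T, -T) : ℝ × ℝ) (T, T) → g p = 0) ∧
        (∫ p : ℝ × ℝ, ‖g p‖ ^ 2) ≠ 0 ∧ a = qangle f g}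
      (Real.arccos (L2norm (DT T f) / L2norm f)) ∧
    ∀ k : ℝ, 0 < k →
      qangle f (fun p => k • DT T f p) =
        Real.arccos (L2norm (DT T f) / L2norm f) := by
  classical
  set s : Set (ℝ × ℝ) := Set.Icc ((-T, -T) : ℝ × ℝ) (T, T) with hs_def
  have hs : MeasurableSet s := measurableSet_Icc
  have hDT_eq : DT T f = s.indicator f := by
    funext p
    show (if p ∈ s then f p else 0) = _
    rw [Set.indicator_apply]
  have hDTm : MemLp (DT T f) 2 (volume : Measure (ℝ × ℝ)) := by
    rw [hDT_eq]; exact hf.indicator hs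
  have hDTsupp : ∀ p ∉ s, DT T f p = 0 := fun p hp => if_neg hp
  have hkey : ∀ g : ℝ × ℝ → Quaternion ℝ, (∀ p ∉ s, g p = 0) →
      ∀ p, f p * star (g p) = DT T f p * star (g p) := by
    intro g hsupp p
    by_cases hp : p ∈ s
    · have h : DT T f p = f p := if_pos hp
      rw [h]
    · rw [hsupp p hp]; simp
  set F := hf.toLp f with hF_def
  set D := hDTm.toLp (DT T f) with hD_def
  have hLf : L2norm f = ‖F‖ := aux_L2norm f hf
  have hLD : L2norm (DT T f) = ‖D‖ := aux_L2norm _ hDTm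
  have hFpos : 0 < ‖F‖ := by
    rcases (norm_nonneg F).lt_or_eq with h | h
    · exact h
    · exact absurd (by rw [aux_normsq f hf, ← hF_def, ← h]; norm_num) hfne
  have hscD : ∀ (g : ℝ × ℝ → Quaternion ℝ) (hg : MemLp g 2 (volume : Measure (ℝ × ℝ))),
      (∀ p ∉ s, g p = 0) →
      (∫ p : ℝ × ℝ, f p * star (g p)).re = (inner ℝ D (hg.toLp g) : ℝ) := by
    intro g hg hsupp
    have h : (∫ p : ℝ × ℝ, f p * star (g p)) = ∫ p : ℝ × ℝ, DT T f p * star (g p) := by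
      congr 1; funext p; exact hkey g hsupp p
    rw [h]; exact aux_sc _ _ hDTm hg
  have hDD : (∫ p : ℝ × ℝ, f p * star (DT T f p)).re = ‖D‖ ^ 2 := by
    rw [hscD (DT T f) hDTm hDTsupp]
    exact real_inner_self_eq_norm_sq D
  have hatt : ∀ k : ℝ, 0 < k →
      qangle f (fun p => k • DT T f p) = Real.arccos (L2norm (DT T f) / L2norm f) := by
    intro k hk
    have hnum : (∫ p : ℝ × ℝ, f p * star (k • DT T f p))
        = k • ∫ p : ℝ × ℝ, f p * star (DT T f p) := by
      rw [← integral_smul]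
      congr 1; funext p
      have hstar_smul : star (k • DT T f p) = k • star (DT T f p) := by
        ext <;> simp
      rw [hstar_smul, mul_smul_comm]
    have hden : L2norm (fun p => k • DT T f p) = k * ‖D‖ := by
      rw [L2norm]
      have h1 : (fun p : ℝ × ℝ => ‖k • DT T f p‖ ^ 2)
          = fun p : ℝ × ℝ => k ^ 2 * ‖DT T f p‖ ^ 2 := by
        funext p; rw [norm_smul, Real.norm_eq_abs, mul_pow, sq_abs]
      rw [h1, integral_const_mul, Real.sqrt_mul (sq_nonneg k), Real.sqrt_sq hk.le, ← L2norm, hLD]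
    show Real.arccos _ = _
    simp only [qangle]; rw [ hnum, hden, hLf, hLD]
    have hre : (k • ∫ p : ℝ × ℝ, f p * star (DT T f p)).re = k * ‖D‖ ^ 2 := by
      rw [Quaternion.re_smul, smul_eq_mul, hDD]
    rw [hre]
    congr 1
    by_cases hD0 : ‖D‖ = 0
    · rw [hD0]; simp
    · field_simp
  have hmem : Real.arccos (L2norm (DT T f) / L2norm f) ∈
      {a : ℝ | ∃ g : ℝ × ℝ → Quaternion ℝ,
        MemLp g 2 (volume : Measure (ℝ × ℝ)) ∧ (∀ p : ℝ × ℝ, p ∉ s → g p = 0) ∧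
        (∫ p : ℝ × ℝ, ‖g p‖ ^ 2) ≠ 0 ∧ a = qangle f g} := by
    by_cases hID : (∫ p : ℝ × ℝ, ‖DT T f p‖ ^ 2) = 0
    · -- degenerate case : take the indicator of s
      have hvolfin : (volume : Measure (ℝ × ℝ)) s ≠ ⊤ :=
        (IsCompact.measure_lt_top isCompact_Icc).ne
      set g : ℝ × ℝ → Quaternion ℝ := s.indicator (fun _ => 1) with hg_def
      have hgmem : MemLp g 2 (volume : Measure (ℝ × ℝ)) :=
        memLp_indicator_const 2 hs 1 (Or.inr hvolfin)
      have hgsupp : ∀ p ∉ s, g p = 0 := fun p hp => Set.indicator_of_notMem hp _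
      have h2T : (0 : ℝ) < 2 * T := by linarith
      have hvol : (volume : Measure (ℝ × ℝ)) s
          = ENNReal.ofReal (2 * T) * ENNReal.ofReal (2 * T) := by
        rw [hs_def, Set.Icc_prod_eq, MeasureTheory.Measure.volume_eq_prod, Measure.prod_prod]
        simp only [Real.volume_Icc]
        norm_num [two_mul]
      have hgsq : ∀ p : ℝ × ℝ, ‖g p‖ ^ 2 = s.indicator (fun _ => (1 : ℝ)) p := by
        intro p; by_cases hp : p ∈ s <;> simp [hg_def, hp]
      have hgne : (∫ p : ℝ × ℝ, ‖g p‖ ^ 2) ≠ 0 := by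
        simp_rw [hgsq]
        rw [MeasureTheory.integral_indicator_const _ hs]
        simp only [smul_eq_mul, mul_one]
        refine (ENNReal.toReal_pos ?_ hvolfin).ne'
        rw [hvol]
        exact mul_ne_zero (ENNReal.ofReal_pos.mpr h2T).ne' (ENNReal.ofReal_pos.mpr h2T).ne'
      have hDT0 : DT T f =ᵐ[(volume : Measure (ℝ × ℝ))] 0 := by
        have hint := aux_sq_integrable _ hDTm
        have h0 := (integral_eq_zero_iff_of_nonneg (fun p => sq_nonneg _) hint).mp hID
        filter_upwards [h0] with p hp
        have : ‖DT T f p‖ ^ 2 = 0 := hp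
        simpa [pow_eq_zero_iff, norm_eq_zero] using this
      have hsc0 : (∫ p : ℝ × ℝ, f p * star (g p)) = 0 := by
        have hfe : (fun p : ℝ × ℝ => f p * star (g p)) =ᵐ[(volume : Measure (ℝ × ℝ))] 0 := by
          filter_upwards [hDT0] with p hp
          have hp' : DT T f p = 0 := hp
          show f p * star (g p) = 0
          rw [hkey g hgsupp p, hp', zero_mul]
        rw [integral_congr_ae hfe]; simp
      have hLD0 : L2norm (DT T f) = 0 := by rw [L2norm, hID, Real.sqrt_zero]
      refine ⟨g, hgmem, hgsupp, hgne, ?_⟩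
      simp only [qangle]; rw [ hsc0, hLD0]
      norm_num [show (QuaternionAlgebra.re (0 : Quaternion ℝ)) = 0 from rfl]
    · refine ⟨DT T f, hDTm, hDTsupp, hID, ?_⟩
      have hDne : ‖D‖ ≠ 0 := by
        intro h
        exact hID (by rw [aux_normsq _ hDTm, ← hD_def, h]; norm_num)
      simp only [qangle]; rw [ hDD, hLf, hLD]
      congr 1
      field_simp
  have hlb : ∀ x ∈ {a : ℝ | ∃ g : ℝ × ℝ → Quaternion ℝ,
        MemLp g 2 (volume : Measure (ℝ × ℝ)) ∧ (∀ p : ℝ × ℝ, p ∉ s → g p = 0) ∧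
        (∫ p : ℝ × ℝ, ‖g p‖ ^ 2) ≠ 0 ∧ a = qangle f g},
      Real.arccos (L2norm (DT T f) / L2norm f) ≤ x := by
    rintro x ⟨g, hg, hsupp, hgne, rfl⟩
    have hLg : L2norm g = ‖hg.toLp g‖ := aux_L2norm g hg
    set G := hg.toLp g with hG_def
    have hGpos : 0 < ‖G‖ := by
      rcases (norm_nonneg G).lt_or_eq with h | h
      · exact h
      · exact absurd (by rw [aux_normsq g hg, ← hG_def, ← h]; norm_num) hgne
    simp only [qangle]; rw [ hLf, hLg, hscD g hg hsupp, hLD]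
    refine aux_arccos_le ?_
    calc (inner ℝ D G : ℝ) / (‖F‖ * ‖G‖)
        ≤ ‖D‖ * ‖G‖ / (‖F‖ * ‖G‖) := by
          exact (div_le_div_iff_of_pos_right (mul_pos hFpos hGpos)).mpr (real_inner_le_norm D G)
      _ = ‖D‖ / ‖F‖ := mul_div_mul_right _ _ hGpos.ne'
  exact ⟨⟨fun x hx => hlb x hx, fun b hb => hb hmem⟩, hatt⟩
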